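/- Fix m ≥ 2 and n ≥ 0. For every integer ℓ ≥ 1, the number of σ in the simple m-nary butterfly group B_{s,n}^{(m)} with L(σ) = ℓ equals the number of tuples (a_1,…,a_n) ∈ {1,…,m}^n with ∏_{j=1}^n max(a_j, m − a_j) = ℓ. Equivalently, for σ uniform on B_{s,n}^{(m)}, the distribution of L(σ) equals the distribution of ∏_{j=1}^n max(X_j, m − X_j) where X_1,…,X_n are i.i.d. uniform on {1,…,m}. -/

import Mathlib

/-- Kronecker product of permutations: `(i, r) ↦ (σ i, π r)` under the
row-major identification `Fin (a * b) ≃ Fin a × Fin b`. -/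
def permKron {a b : ℕ} (σ : Equiv.Perm (Fin a)) (π : Equiv.Perm (Fin b)) :
    Equiv.Perm (Fin (a * b)) :=
  finProdFinEquiv.symm.trans ((Equiv.prodCongr σ π).trans finProdFinEquiv)

/-- Direct (block) sum of permutations: `(i, r) ↦ (i, π i r)`. -/
def permBlockSum {a b : ℕ} (π : Fin a → Equiv.Perm (Fin b)) :
    Equiv.Perm (Fin (a * b)) :=
  finProdFinEquiv.symm.trans ((Equiv.prodCongrRight π).trans finProdFinEquiv)

/-- The simple `m`-nary butterfly permutations of `Fin (m ^ n)`:
Kronecker products `τ^{a₁} ⊗ ⋯ ⊗ τ^{aₙ}` of powers of the standard `m`-cycle `τ = finRotate m`. -/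
def simpleButterfly (m : ℕ) : (n : ℕ) → Set (Equiv.Perm (Fin (m ^ n)))
  | 0 => {1}
  | n + 1 =>
    {σ | ∃ (a : ℤ) (π : Equiv.Perm (Fin (m ^ n))), π ∈ simpleButterfly m n ∧
      σ = (finCongr (pow_succ' m n).symm).permCongr (permKron (finRotate m ^ a) π)}

/-- The nonsimple `m`-nary butterfly permutations of `Fin (m ^ n)`:
`B₀ = {1}`, `B_{n+1} = {(τ^a ⊗ id) ∘ (σ₁ ⊕ ⋯ ⊕ σ_m) : σᵢ ∈ B_n}`. -/
def nonsimpleButterfly (m : ℕ) : (n : ℕ) → Set (Equiv.Perm (Fin (m ^ n)))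
  | 0 => {1}
  | n + 1 =>
    {σ | ∃ (a : ℤ) (π : Fin m → Equiv.Perm (Fin (m ^ n))),
      (∀ i, π i ∈ nonsimpleButterfly m n) ∧
      σ = (finCongr (pow_succ' m n).symm).permCongr
        (permKron (finRotate m ^ a) 1 * permBlockSum π)}

/-- The length of the longest increasing subsequence of a permutation. -/
noncomputable def LIS {M : ℕ} (σ : Equiv.Perm (Fin M)) : ℕ :=
  sSup {k | ∃ t : Finset (Fin M), t.card = k ∧ StrictMonoOn (⇑σ) ↑t}

/-- The length of the longest decreasing subsequence of a permutation. -/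
noncomputable def LDS {M : ℕ} (σ : Equiv.Perm (Fin M)) : ℕ :=
  sSup {k | ∃ t : Finset (Fin M), t.card = k ∧ StrictAntiOn (⇑σ) ↑t}

/-- The number of cycles in the disjoint cycle decomposition of `σ`,
counting fixed points as cycles of length 1. -/
def numCycles {M : ℕ} (σ : Equiv.Perm (Fin M)) : ℕ :=
  Multiset.card σ.cycleType + (Finset.univ.filter fun x => σ x = x).card

/-- The number of fixed points of `σ`. -/
def numFixed {M : ℕ} (σ : Equiv.Perm (Fin M)) : ℕ :=
  (Finset.univ.filter fun x => σ x = x).card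

/-!
Since `τ` has order `m`, every element of `B_{s,n}^{(m)}` is `τ^{b₁} ⊗ ⋯ ⊗ τ^{bₙ}` for a unique
`b ∈ {1,…,m}ⁿ`. The longest increasing subsequence is multiplicative under `⊗`: an increasing
subsequence of `σ ⊗ π` projects to an increasing subsequence of `σ` whose fibres are increasing
subsequences of `π`, while products of increasing subsequences are increasing. Finally `τ^b` is
increasing on the blocks `[0, m - b)` and `[m - b, m)`, and every value on the first block exceeds
every value on the second, so `L(τ^b) = max(b, m - b)`.
-/

open Finset

section LIS

variable {M : ℕ}

lemma LIS_set_bddAbove (σ : Equiv.Perm (Fin M)) :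
    BddAbove {k | ∃ t : Finset (Fin M), #t = k ∧ StrictMonoOn (⇑σ) ↑t} :=
  ⟨M, by rintro _ ⟨t, rfl, -⟩; simpa using card_le_univ t⟩

lemma LIS_set_nonempty (σ : Equiv.Perm (Fin M)) :
    {k | ∃ t : Finset (Fin M), #t = k ∧ StrictMonoOn (⇑σ) ↑t}.Nonempty :=
  ⟨0, ∅, rfl, by simp [StrictMonoOn]⟩

lemma card_le_LIS {σ : Equiv.Perm (Fin M)} {t : Finset (Fin M)} (ht : StrictMonoOn σ ↑t) :
    #t ≤ LIS σ :=
  le_csSup (LIS_set_bddAbove σ) ⟨t, rfl, ht⟩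

lemma exists_card_eq_LIS (σ : Equiv.Perm (Fin M)) :
    ∃ t : Finset (Fin M), #t = LIS σ ∧ StrictMonoOn σ ↑t :=
  Nat.sSup_mem (LIS_set_nonempty σ) (LIS_set_bddAbove σ)

lemma LIS_le {σ : Equiv.Perm (Fin M)} {l : ℕ}
    (h : ∀ t : Finset (Fin M), StrictMonoOn σ ↑t → #t ≤ l) : LIS σ ≤ l :=
  csSup_le (LIS_set_nonempty σ) fun _ ⟨t, ht, hmono⟩ => ht ▸ h t hmono

@[simp]
lemma LIS_one : LIS (1 : Equiv.Perm (Fin M)) = M :=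
  le_antisymm (LIS_le fun t _ => by simpa using card_le_univ t)
    (by simpa using card_le_LIS (σ := 1) (t := univ) fun _ _ _ _ h => h)

@[simp]
lemma LIS_permCongr_finCongr {N : ℕ} (h : M = N) (σ : Equiv.Perm (Fin M)) :
    LIS ((finCongr h).permCongr σ) = LIS σ := by
  subst h
  rfl

end LIS

section Rotation

variable {m : ℕ}

lemma val_finRotate_pow_apply (k : ℕ) (i : Fin m) :
    ((finRotate m ^ k) i : ℕ) = (i + k) % m := by
  induction k with
  | zero => simp [Nat.mod_eq_of_lt i.isLt]
  | succ k ih =>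
    have := i.neZero
    rw [pow_succ', Equiv.Perm.mul_apply, finRotate_apply, Fin.val_add, ih, Fin.val_one']
    simp [Nat.add_mod, ← add_assoc]

lemma orderOf_finRotate (hm : 0 < m) : orderOf (finRotate m) = m := by
  rw [orderOf_eq_iff hm]
  refine ⟨Equiv.ext fun i => Fin.ext ?_, fun k hkm hk h => ?_⟩
  · simp [val_finRotate_pow_apply, Nat.mod_eq_of_lt i.isLt]
  · have := congrArg Fin.val (Equiv.ext_iff.1 h ⟨0, hm⟩)
    simp [val_finRotate_pow_apply, Nat.mod_eq_of_lt hkm] at this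
    omega

lemma exists_finRotate_zpow_eq_pow_succ (hm : 0 < m) (a : ℤ) :
    ∃ j : Fin m, finRotate m ^ a = finRotate m ^ ((j : ℕ) + 1) := by
  have hm' : (0 : ℤ) < m := by exact_mod_cast hm
  have h0 := Int.emod_nonneg (a - 1) hm'.ne'
  refine ⟨⟨((a - 1) % m).toNat, by have := Int.emod_lt_of_pos (a - 1) hm'; omega⟩, ?_⟩
  rw [← zpow_natCast, zpow_eq_zpow_iff_modEq, orderOf_finRotate hm]
  have := ((Int.mod_modEq (a - 1) m).add_right 1).symm
  simpa [Int.toNat_of_nonneg h0] using this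

lemma finRotate_pow_succ_injective (hm : 0 < m) :
    Function.Injective fun j : Fin m => finRotate m ^ ((j : ℕ) + 1) := by
  intro j j' h
  rw [pow_inj_mod, orderOf_finRotate hm] at h
  have := Nat.ModEq.add_right_cancel' 1 h
  exact Fin.ext (by simpa [Nat.ModEq, Nat.mod_eq_of_lt j.isLt, Nat.mod_eq_of_lt j'.isLt] using this)

lemma LIS_finRotate_pow {b : ℕ} (hb : 0 < b) (hbm : b ≤ m) :
    LIS (finRotate m ^ b) = max b (m - b) := by
  obtain ⟨c, hc⟩ : ∃ c : Fin m, (c : ℕ) = m - b := ⟨⟨m - b, by omega⟩, rfl⟩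
  have h_lo : ∀ i, i < c → ((finRotate m ^ b) i : ℕ) = i + b := fun i hi => by
    rw [val_finRotate_pow_apply, Nat.mod_eq_of_lt (by rw [Fin.lt_def] at hi; omega)]
  have h_hi : ∀ i, c ≤ i → ((finRotate m ^ b) i : ℕ) = i - (m - b) := fun i hi => by
    rw [val_finRotate_pow_apply, Nat.mod_eq_sub_mod (by rw [Fin.le_def] at hi; omega),
      Nat.mod_eq_of_lt (by omega)]
    omega
  apply le_antisymm
  · refine LIS_le fun t ht => ?_
    have h_block : t ⊆ Iio c ∨ t ⊆ Ici c := by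
      by_contra! h
      obtain ⟨⟨x, hxt, hx⟩, ⟨y, hyt, hy⟩⟩ := And.imp not_subset.1 not_subset.1 h
      rw [mem_Iio, not_lt] at hx
      rw [mem_Ici, not_le] at hy
      have h_lt := Fin.lt_def.1 (ht hyt hxt (hy.trans_le hx))
      rw [h_lo y hy, h_hi x hx] at h_lt
      omega
    rcases h_block with h | h
    · exact (card_le_card h).trans (by simp [hc])
    · exact (card_le_card h).trans (by simp [hc]; omega)
  · refine max_le ?_ ?_
    · have := card_le_LIS (σ := finRotate m ^ b) (t := Ici c) fun x hx y hy hxy => by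
        simp only [coe_Ici, Set.mem_Ici] at hx hy
        rw [Fin.lt_def, h_hi x hx, h_hi y hy]
        rw [Fin.lt_def, Fin.le_def] at *
        omega
      simpa [hc, Nat.sub_sub_self hbm] using this
    · have := card_le_LIS (σ := finRotate m ^ b) (t := Iio c) fun x hx y hy hxy => by
        simp only [coe_Iio, Set.mem_Iio] at hx hy
        rw [Fin.lt_def, h_lo x hx, h_lo y hy]
        exact Nat.add_lt_add_right hxy b
      simpa [hc] using this

end Rotation

section Kronecker

variable {a b : ℕ}

lemma strictMono_finProdFinEquiv_toLex :
    StrictMono fun p : Fin a ×ₗ Fin b => finProdFinEquiv (ofLex p) := by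
  intro p q h
  rw [Prod.Lex.lt_iff] at h
  simp only [Fin.lt_def, finProdFinEquiv_apply_val]
  rcases h with h | ⟨h, h₂⟩
  · have h_rows := Nat.mul_le_mul_left b (Fin.lt_def.1 h)
    have h_col := (ofLex p).2.isLt
    rw [Nat.mul_succ] at h_rows
    omega
  · rw [h]
    exact Nat.add_lt_add_right h₂ _

lemma finProdFinEquiv_lt_finProdFinEquiv {p q : Fin a × Fin b} :
    finProdFinEquiv p < finProdFinEquiv q ↔ toLex p < toLex q :=
  strictMono_finProdFinEquiv_toLex.lt_iff_lt

lemma permKron_finProdFinEquiv (σ : Equiv.Perm (Fin a)) (π : Equiv.Perm (Fin b))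
    (p : Fin a × Fin b) :
    permKron σ π (finProdFinEquiv p) = finProdFinEquiv (σ p.1, π p.2) := by
  simp [permKron, Prod.map]

lemma LIS_permKron_le (σ : Equiv.Perm (Fin a)) (π : Equiv.Perm (Fin b)) :
    LIS (permKron σ π) ≤ LIS σ * LIS π := by
  classical
  refine LIS_le fun t ht => ?_
  set T := t.map finProdFinEquiv.symm.toEmbedding
  have hT : ∀ p ∈ T, ∀ q ∈ T,
      toLex p < toLex q → toLex (σ p.1, π p.2) < toLex (σ q.1, π q.2) := by
    intro p hp q hq hpq
    rw [mem_map_equiv, Equiv.symm_symm] at hp hq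
    rw [← finProdFinEquiv_lt_finProdFinEquiv, ← permKron_finProdFinEquiv,
      ← permKron_finProdFinEquiv]
    exact ht hp hq (finProdFinEquiv_lt_finProdFinEquiv.2 hpq)
  have h_rows : StrictMonoOn σ ↑(T.image Prod.fst) := by
    rw [coe_image]
    rintro _ ⟨p, hp, rfl⟩ _ ⟨q, hq, rfl⟩ hpq
    rcases Prod.Lex.toLex_lt_toLex.1 (hT p hp q hq (Prod.Lex.toLex_lt_toLex.2 (.inl hpq)))
      with h | ⟨h, -⟩
    · exact h
    · exact absurd (σ.injective h) hpq.ne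
  have h_row_card (i : Fin a) : #{p ∈ T | p.1 = i} ≤ LIS π := by
    rw [← card_image_of_injOn fun p hp q hq h =>
      Prod.ext ((mem_filter.1 hp).2.trans (mem_filter.1 hq).2.symm) h]
    refine card_le_LIS ?_
    rw [coe_image]
    rintro _ ⟨p, hp, rfl⟩ _ ⟨q, hq, rfl⟩ hpq
    rw [mem_coe, mem_filter] at hp hq
    have h_row : p.1 = q.1 := hp.2.trans hq.2.symm
    rcases Prod.Lex.toLex_lt_toLex.1
      (hT p hp.1 q hq.1 (Prod.Lex.toLex_lt_toLex.2 (.inr ⟨h_row, hpq⟩))) with h | ⟨-, h⟩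
    · exact absurd (h_row ▸ h) (lt_irrefl _)
    · exact h
  calc #t = #T := (card_map _).symm
    _ ≤ LIS π * #(T.image Prod.fst) :=
      card_le_mul_card_image T _ fun i _ => h_row_card i
    _ ≤ LIS σ * LIS π := by
      rw [mul_comm]
      exact Nat.mul_le_mul_right _ (card_le_LIS h_rows)

lemma le_LIS_permKron (σ : Equiv.Perm (Fin a)) (π : Equiv.Perm (Fin b)) :
    LIS σ * LIS π ≤ LIS (permKron σ π) := by
  obtain ⟨s, hs, hσ⟩ := exists_card_eq_LIS σ
  obtain ⟨u, hu, hπ⟩ := exists_card_eq_LIS π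
  have h_mono : StrictMonoOn (permKron σ π) ↑((s ×ˢ u).map finProdFinEquiv.toEmbedding) := by
    rw [coe_map]
    rintro _ ⟨p, hp, rfl⟩ _ ⟨q, hq, rfl⟩ hpq
    rw [mem_coe, mem_product] at hp hq
    simp only [Equiv.coe_toEmbedding, permKron_finProdFinEquiv,
      finProdFinEquiv_lt_finProdFinEquiv, Prod.Lex.toLex_lt_toLex] at hpq ⊢
    rcases hpq with h | ⟨h, h'⟩
    · exact .inl (hσ hp.1 hq.1 h)
    · exact .inr ⟨congrArg σ h, hπ hp.2 hq.2 h'⟩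
  simpa [hs, hu] using card_le_LIS h_mono

lemma LIS_permKron (σ : Equiv.Perm (Fin a)) (π : Equiv.Perm (Fin b)) :
    LIS (permKron σ π) = LIS σ * LIS π :=
  (LIS_permKron_le σ π).antisymm (le_LIS_permKron σ π)

lemma permKron_inj (ha : 0 < a) (hb : 0 < b) {σ σ' : Equiv.Perm (Fin a)}
    {π π' : Equiv.Perm (Fin b)} : permKron σ π = permKron σ' π' ↔ σ = σ' ∧ π = π' := by
  refine ⟨fun h => ?_, fun h => h.1 ▸ h.2 ▸ rfl⟩
  have h_pair (i : Fin a) (r : Fin b) : (σ i, π r) = (σ' i, π' r) := by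
    have := Equiv.ext_iff.1 h (finProdFinEquiv (i, r))
    rwa [permKron_finProdFinEquiv, permKron_finProdFinEquiv,
      finProdFinEquiv.apply_eq_iff_eq] at this
  exact ⟨Equiv.ext fun i => congrArg Prod.fst (h_pair i ⟨0, hb⟩),
    Equiv.ext fun r => congrArg Prod.snd (h_pair ⟨0, ha⟩ r)⟩

end Kronecker

section Butterfly

variable {m : ℕ}

/-- `τ^{a₀+1} ⊗ ⋯ ⊗ τ^{aₙ₋₁+1}`: exponents are shifted into `{1, …, m}` as in the theorem. -/
def butterflyPerm (m : ℕ) : (n : ℕ) → (Fin n → Fin m) → Equiv.Perm (Fin (m ^ n))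
  | 0, _ => 1
  | n + 1, a =>
    (finCongr (pow_succ' m n).symm).permCongr
      (permKron (finRotate m ^ ((a 0 : ℕ) + 1)) (butterflyPerm m n (Fin.tail a)))

lemma LIS_butterflyPerm (hm : 0 < m) :
    ∀ (n : ℕ) (a : Fin n → Fin m),
      LIS (butterflyPerm m n a) = ∏ j, max ((a j : ℕ) + 1) (m - ((a j : ℕ) + 1))
  | 0, _ => by simp only [butterflyPerm, LIS_one, pow_zero, univ_eq_empty, prod_empty]
  | n + 1, a => by
    rw [butterflyPerm, LIS_permCongr_finCongr, LIS_permKron, LIS_butterflyPerm hm n,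
      LIS_finRotate_pow (Nat.succ_pos _) (a 0).isLt, Fin.prod_univ_succ]
    rfl

lemma simpleButterfly_eq_range_butterflyPerm (hm : 0 < m) :
    ∀ n : ℕ, simpleButterfly m n = Set.range (butterflyPerm m n)
  | 0 => Set.range_const.symm
  | n + 1 => by
    ext σ
    simp only [simpleButterfly, simpleButterfly_eq_range_butterflyPerm hm n, Set.mem_ofPred_eq,
      Set.mem_range, exists_exists_eq_and]
    constructor
    · rintro ⟨k, a, rfl⟩
      obtain ⟨j, hj⟩ := exists_finRotate_zpow_eq_pow_succ hm k
      exact ⟨Fin.cons j a, by rw [butterflyPerm, hj]; rfl⟩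
    · rintro ⟨a, rfl⟩
      exact ⟨((a 0 : ℕ) + 1 : ℕ), Fin.tail a, by rw [butterflyPerm, zpow_natCast]⟩

lemma butterflyPerm_injective (hm : 0 < m) : ∀ n : ℕ, Function.Injective (butterflyPerm m n)
  | 0 => fun _ _ _ => Subsingleton.elim _ _
  | n + 1 => fun a a' h => by
    rw [butterflyPerm, butterflyPerm, (Equiv.permCongr _).apply_eq_iff_eq,
      permKron_inj hm (pow_pos hm n)] at h
    exact Fin.cons_self_tail a ▸ Fin.cons_self_tail a' ▸
      congrArg₂ Fin.cons (finRotate_pow_succ_injective hm h.1)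
        (butterflyPerm_injective hm n h.2)

end Butterfly

theorem simpleButterfly_LIS_distribution_general (m n : ℕ) (hm : 2 ≤ m) (ℓ : ℕ) :
    {σ | σ ∈ simpleButterfly m n ∧ LIS σ = ℓ}.ncard =
      (Finset.univ.filter fun a : Fin n → Fin m =>
        (∏ j, max ((a j : ℕ) + 1) (m - ((a j : ℕ) + 1))) = ℓ).card := by
  have hm_pos : 0 < m := by omega
  have h_image : {σ | σ ∈ simpleButterfly m n ∧ LIS σ = ℓ} =
      butterflyPerm m n '' ↑(univ.filter fun a : Fin n → Fin m =>
        (∏ j, max ((a j : ℕ) + 1) (m - ((a j : ℕ) + 1))) = ℓ) := by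
    ext σ
    simp only [simpleButterfly_eq_range_butterflyPerm hm_pos, coe_filter, Set.mem_ofPred_eq,
      Set.mem_image, Set.mem_range, mem_univ, true_and]
    constructor
    · rintro ⟨⟨a, rfl⟩, rfl⟩
      exact ⟨a, (LIS_butterflyPerm hm_pos n a).symm, rfl⟩
    · rintro ⟨a, rfl, rfl⟩
      exact ⟨⟨a, rfl⟩, LIS_butterflyPerm hm_pos n a⟩
  rw [h_image, Set.ncard_image_of_injective _ (butterflyPerm_injective hm_pos n),
    Set.ncard_coe_finset]

/-- The number of `σ ∈ B_{s,n}^{(m)}` with `L(σ) = ℓ` equals the number of tuples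
`(a₁,…,aₙ) ∈ {1,…,m}ⁿ` with `∏ⱼ max(aⱼ, m − aⱼ) = ℓ` (here `a : Fin n → Fin m`
encodes `aⱼ = a j + 1 ∈ {1,…,m}`).  Equivalently, for `σ` uniform on `B_{s,n}^{(m)}`,
`L(σ)` is distributed as `∏ⱼ max(Xⱼ, m − Xⱼ)` with `Xⱼ` i.i.d. uniform on `{1,…,m}`. -/
theorem simpleButterfly_LIS_distribution (m n : ℕ) (hm : 2 ≤ m) (ℓ : ℕ) (hℓ : 1 ≤ ℓ) :
    {σ | σ ∈ simpleButterfly m n ∧ LIS σ = ℓ}.ncard =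
      (Finset.univ.filter fun a : Fin n → Fin m =>
        (∏ j, max ((a j : ℕ) + 1) (m - ((a j : ℕ) + 1))) = ℓ).card :=
  simpleButterfly_LIS_distribution_general m n hm ℓ
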